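/- Let ρ ∈ (0,1] and let A be a maximal (ρ/5)-separated subset of T². Then for every finite Borel measure ν on T², ‖ν‖²_ρ ≥ (π / (4·19²·C₀·ρ²)) · Σ_{z∈A} ν(B(z,ρ/4))². -/

import Mathlib

open MeasureTheory Metric Filter Topology
open scoped ENNReal

/-- The flat two-torus `ℝ²/ℤ²`, realized as the `L²`-product of two circles of length one. -/
abbrev T2 : Type := PiLp 2 fun _ : Fin 2 => AddCircle (1 : ℝ)

noncomputable instance : MeasurableSpace T2 := borel T2
instance : BorelSpace T2 := ⟨rfl⟩
instance : CompactSpace T2 := (PiLp.homeomorph 2 fun _ : Fin 2 => AddCircle (1 : ℝ)).symm.compactSpace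

/-- The condition `C₀⁻¹ ≤ dm/dLeb ≤ C₀` for the smooth measure `m` in terms of the Haar
probability measure `Leb`. -/
def DensityBounds (C₀ : ℝ) (Leb m : Measure T2) : Prop :=
  ∀ s : Set T2, MeasurableSet s →
    ENNReal.ofReal C₀⁻¹ * Leb s ≤ m s ∧ m s ≤ ENNReal.ofReal C₀ * Leb s

/-- The `ρ`-inner product `⟨ν,ν'⟩_ρ = ρ⁻⁴ ∫ ν(B(z,ρ)) ν'(B(z,ρ)) dm(z)`. -/
noncomputable def rinner (m ν ν' : Measure T2) (ρ : ℝ) : ℝ :=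
  (1 / ρ ^ 4) * ∫ z, (ν (ball z ρ)).toReal * (ν' (ball z ρ)).toReal ∂m

/-- The `ρ`-semi-norm `‖ν‖_ρ = ⟨ν,ν⟩_ρ^{1/2}`. -/
noncomputable def rnorm (m ν : Measure T2) (ρ : ℝ) : ℝ :=
  Real.sqrt (rinner m ν ν ρ)

/-- A set is `s`-separated if any two distinct points of it are at distance greater than `s`. -/
def IsSeparated' (s : ℝ) (A : Set T2) : Prop :=
  A.Pairwise fun x y => s < dist x y

/-
For y ∈ B(z, ρ/10) we have B(z, ρ/4) ⊆ B(y, ρ), so ν(B(y,ρ))² ≥ ν(B(z,ρ/4))² on B(z, ρ/10).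
For z ∈ A these small balls are pairwise disjoint by separation, and each has m-mass at least
C₀⁻¹/n² because n² translates of it (centred on a grid of mesh 1/n, n ≈ 15/ρ) cover the torus.
Integrating over their union bounds ρ⁴‖ν‖²_ρ from below by C₀⁻¹ n⁻² Σ_z ν(B(z,ρ/4))², and
π (nρ)² ≤ 4·19² compares the constants.
-/

section BallMeasure

variable {X : Type*} [PseudoMetricSpace X] [MeasurableSpace X] [OpensMeasurableSpace X]

theorem measurable_measure_ball [SecondCountableTopology X] (ν : Measure X) [SFinite ν] (r : ℝ) :
    Measurable fun y => ν (ball y r) :=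
  measurable_measure_prodMk_left
    (isOpen_lt (by fun_prop) continuous_const : IsOpen {p : X × X | dist p.2 p.1 < r}).measurableSet

theorem measureReal_mul_measureReal_ball_sq_le_setIntegral (m ν : Measure X) [IsFiniteMeasure m]
    [IsFiniteMeasure ν] {x : X} {r s ρ : ℝ} (hsr : s + r ≤ ρ)
    (hint : Integrable (fun y => ν.real (ball y ρ) ^ 2) m) :
    m.real (ball x r) * ν.real (ball x s) ^ 2 ≤ ∫ y in ball x r, ν.real (ball y ρ) ^ 2 ∂m := by
  rw [← smul_eq_mul, ← setIntegral_const]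
  refine setIntegral_mono_on (integrableOn_const (measure_ne_top m _)) hint.integrableOn
    measurableSet_ball fun y hy => ?_
  have hsub : ball x s ⊆ ball y ρ := ball_subset_ball' (by linarith [mem_ball'.1 hy])
  gcongr
  exact measure_ne_top ν _

theorem mul_tsum_measureReal_ball_sq_le_integral [SecondCountableTopology X] (m ν : Measure X)
    [IsFiniteMeasure m] [IsFiniteMeasure ν] {ι : Type*} {z : ι → X} {r s ρ c : ℝ}
    (hz : Pairwise fun i j => r + r ≤ dist (z i) (z j)) (hsr : s + r ≤ ρ)
    (hc : ∀ i, c ≤ m.real (ball (z i) r)) :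
    c * ∑' i, ν.real (ball (z i) s) ^ 2 ≤ ∫ y, ν.real (ball y ρ) ^ 2 ∂m := by
  have hint : Integrable (fun y => ν.real (ball y ρ) ^ 2) m := by
    refine .of_bound ((measurable_measure_ball ν ρ).ennreal_toReal.pow_const 2).aestronglyMeasurable
      (ν.real Set.univ ^ 2) (.of_forall fun y => ?_)
    rw [Real.norm_of_nonneg (by positivity)]
    gcongr
    · exact measure_ne_top ν _
    · exact Set.subset_univ _
  rw [← tsum_mul_left]
  refine tsum_le_of_sum_le' (integral_nonneg fun y => by positivity) fun F => ?_
  calc ∑ i ∈ F, c * ν.real (ball (z i) s) ^ 2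
      ≤ ∑ i ∈ F, ∫ y in ball (z i) r, ν.real (ball y ρ) ^ 2 ∂m :=
        Finset.sum_le_sum fun i _ => (mul_le_mul_of_nonneg_right (hc i) (sq_nonneg _)).trans
          (measureReal_mul_measureReal_ball_sq_le_setIntegral m ν hsr hint)
    _ = ∫ y in ⋃ i ∈ F, ball (z i) r, ν.real (ball y ρ) ^ 2 ∂m :=
        (integral_biUnion_finset F (fun _ _ => measurableSet_ball)
          (fun i _ j _ hij => ball_disjoint_ball (hz hij)) fun _ _ => hint.integrableOn).symm
    _ ≤ ∫ y, ν.real (ball y ρ) ^ 2 ∂m :=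
        setIntegral_le_integral hint (.of_forall fun y => by positivity)

end BallMeasure

theorem one_le_card_mul_measureReal_ball {E : Type*} [NormedAddCommGroup E] [MeasurableSpace E]
    [BorelSpace E] (μ : Measure E) [IsProbabilityMeasure μ] [μ.IsAddHaarMeasure] {S : Finset E}
    {r : ℝ} (hS : ∀ x, ∃ c ∈ S, dist x c < r) (z : E) : 1 ≤ S.card * μ.real (ball z r) := by
  have hcover : (Set.univ : Set E) ⊆ ⋃ c ∈ S, ball c r := fun x _ => by
    obtain ⟨c, hc, hxc⟩ := hS x
    exact Set.mem_biUnion hc hxc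
  calc (1 : ℝ) = μ.real Set.univ := probReal_univ.symm
    _ ≤ μ.real (⋃ c ∈ S, ball c r) := measureReal_mono hcover (measure_ne_top μ _)
    _ ≤ ∑ c ∈ S, μ.real (ball c r) := measureReal_biUnion_finset_le S _
    _ = S.card * μ.real (ball z r) := by
      simp [Measure.addHaar_real_ball_center μ _ r]

theorem AddCircle.exists_dist_coe_div_le {n : ℕ} (hn : 0 < n) (x : AddCircle (1 : ℝ)) :
    ∃ i ∈ Finset.range n, dist x ((i / n : ℝ) : AddCircle (1 : ℝ)) ≤ 1 / n := by
  obtain ⟨t, rfl⟩ := QuotientAddGroup.mk_surjective x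
  rw [← AddCircle.coe_fract t]
  set u := Int.fract t
  have hn' : (0 : ℝ) < n := by exact_mod_cast hn
  have hu : 0 ≤ u := Int.fract_nonneg t
  have hfloor : (⌊n * u⌋₊ : ℝ) ≤ n * u := Nat.floor_le (by positivity)
  have hfloor' : n * u < ⌊n * u⌋₊ + 1 := Nat.lt_floor_add_one _
  refine ⟨⌊n * u⌋₊, Finset.mem_range.2 ((Nat.floor_lt (by positivity)).2 ?_), ?_⟩
  · nlinarith [Int.fract_lt_one t]
  rw [dist_eq_norm, ← AddCircle.coe_sub]
  refine (QuotientAddGroup.norm_mk_le_norm (S := AddSubgroup.zmultiples (1 : ℝ))).trans ?_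
  rw [show u - ⌊n * u⌋₊ / n = (n * u - ⌊n * u⌋₊) / n by field_simp, Real.norm_eq_abs, abs_div,
    abs_of_nonneg (by linarith), abs_of_pos hn']
  gcongr
  linarith

noncomputable def torusGrid (n : ℕ) : Finset T2 :=
  (Finset.range n ×ˢ Finset.range n).image fun ij =>
    WithLp.toLp 2 ![((ij.1 / n : ℝ) : AddCircle (1 : ℝ)), ((ij.2 / n : ℝ) : AddCircle (1 : ℝ))]

theorem card_torusGrid_le (n : ℕ) : (torusGrid n).card ≤ n ^ 2 :=
  Finset.card_image_le.trans (by simp [sq])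

theorem exists_mem_torusGrid_dist_sq_le {n : ℕ} (hn : 0 < n) (z : T2) :
    ∃ c ∈ torusGrid n, dist z c ^ 2 ≤ 2 / n ^ 2 := by
  obtain ⟨i, hi, hzi⟩ := AddCircle.exists_dist_coe_div_le hn (z 0)
  obtain ⟨j, hj, hzj⟩ := AddCircle.exists_dist_coe_div_le hn (z 1)
  refine ⟨_, Finset.mem_image_of_mem _ (Finset.mk_mem_product hi hj), ?_⟩
  rw [PiLp.dist_sq_eq_of_L2, Fin.sum_univ_two]
  calc _ ≤ (1 / n : ℝ) ^ 2 + (1 / n : ℝ) ^ 2 := by gcongr; exacts [hzi, hzj]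
    _ = 2 / n ^ 2 := by ring

theorem one_le_sq_mul_measureReal_ball_T2 (Leb : Measure T2) [IsProbabilityMeasure Leb]
    [Leb.IsAddHaarMeasure] {n : ℕ} (hn : 0 < n) {r : ℝ} (hr : 0 ≤ r) (hnr : 2 < (n * r) ^ 2)
    (z : T2) : 1 ≤ n ^ 2 * Leb.real (ball z r) := by
  have hn' : (0 : ℝ) < n := by exact_mod_cast hn
  have hcover : ∀ x, ∃ c ∈ torusGrid n, dist x c < r := fun x => by
    obtain ⟨c, hc, hxc⟩ := exists_mem_torusGrid_dist_sq_le hn x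
    refine ⟨c, hc, lt_of_pow_lt_pow_left₀ 2 hr (hxc.trans_lt ?_)⟩
    rw [div_lt_iff₀ (by positivity)]
    linarith [mul_pow (n : ℝ) r 2]
  calc 1 ≤ (torusGrid n).card * Leb.real (ball z r) :=
        one_le_card_mul_measureReal_ball Leb hcover z
    _ ≤ n ^ 2 * Leb.real (ball z r) := by
        gcongr
        exact_mod_cast card_torusGrid_le n

theorem DensityBounds.inv_mul_measureReal_le {C₀ : ℝ} {Leb m : Measure T2} [IsFiniteMeasure m]
    (hm : DensityBounds C₀ Leb m) {s : Set T2} (hs : MeasurableSet s) :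
    C₀⁻¹ * Leb.real s ≤ m.real s := by
  have h := ENNReal.toReal_mono (measure_ne_top m s) (hm s hs).1
  rw [ENNReal.toReal_mul, ENNReal.toReal_ofReal'] at h
  exact (mul_le_mul_of_nonneg_right (le_max_left _ _) measureReal_nonneg).trans h

theorem DensityBounds.inv_div_sq_le_measureReal_ball {C₀ : ℝ} (hC₀ : 0 ≤ C₀) {Leb m : Measure T2}
    [IsProbabilityMeasure Leb] [Leb.IsAddHaarMeasure] [IsFiniteMeasure m]
    (hm : DensityBounds C₀ Leb m) {n : ℕ} (hn : 0 < n) {r : ℝ} (hr : 0 ≤ r)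
    (hnr : 2 < (n * r) ^ 2) (z : T2) : C₀⁻¹ / n ^ 2 ≤ m.real (ball z r) := by
  have hLeb := one_le_sq_mul_measureReal_ball_T2 Leb hn hr hnr z
  have hdens := hm.inv_mul_measureReal_le (measurableSet_ball (x := z) (ε := r))
  rw [div_le_iff₀ (by positivity)]
  nlinarith [inv_nonneg.2 hC₀]

theorem exists_nat_mul_mem_Icc {a ρ : ℝ} (ha : 0 < a) (hρ : 0 < ρ) (hρ' : ρ ≤ 1) :
    ∃ n : ℕ, 0 < n ∧ a ≤ n * ρ ∧ n * ρ ≤ a + 1 := by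
  refine ⟨⌈a / ρ⌉₊, Nat.ceil_pos.2 (by positivity), (div_le_iff₀ hρ).1 (Nat.le_ceil _), ?_⟩
  have h := Nat.ceil_lt_add_one (by positivity : 0 ≤ a / ρ)
  have h' : (a / ρ + 1) * ρ ≤ a + 1 := by field_simp; linarith
  nlinarith

theorem rnormSq_ge_separated_sum_general
    (C₀ : ℝ) (hC₀ : 1 ≤ C₀) (Leb m : Measure T2)
    [IsProbabilityMeasure Leb] [Leb.IsAddHaarMeasure]
    [IsProbabilityMeasure m] (hm : DensityBounds C₀ Leb m)
    (ρ : ℝ) (hρ : 0 < ρ) (hρ' : ρ ≤ 1) (A : Set T2)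
    (hsep : IsSeparated' (ρ / 5) A)
    (ν : Measure T2) [IsFiniteMeasure ν] :
    (Real.pi / (4 * 19 ^ 2 * C₀ * ρ ^ 2)) * ∑' z : A, (ν (ball (z : T2) (ρ / 4))).toReal ^ 2 ≤
      rinner m ν ν ρ := by
  obtain ⟨n, hn, hnρ, hnρ'⟩ := exists_nat_mul_mem_Icc (a := 15) (by norm_num) hρ hρ'
  have hball (z : A) : C₀⁻¹ / n ^ 2 ≤ m.real (ball (z : T2) (ρ / 10)) :=
    hm.inv_div_sq_le_measureReal_ball (by linarith) hn (by positivity) (by nlinarith) z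
  have hsep' : Pairwise fun i j : A => ρ / 10 + ρ / 10 ≤ dist (i : T2) j := fun i j hij => by
    linarith [hsep i.2 j.2 (Subtype.coe_injective.ne hij)]
  have hconst : Real.pi / (4 * 19 ^ 2 * C₀ * ρ ^ 2) ≤ 1 / ρ ^ 4 * (C₀⁻¹ / n ^ 2) := by
    have hC₀ρ : 0 < C₀ * ρ ^ 2 := by positivity
    rw [show 1 / ρ ^ 4 * (C₀⁻¹ / n ^ 2) = 1 / ((n * ρ) ^ 2 * (C₀ * ρ ^ 2)) by field_simp,
      div_le_div_iff₀ (by positivity) (by positivity)]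
    have hπ : Real.pi * (n * ρ) ^ 2 ≤ 4 * 19 ^ 2 := by nlinarith [Real.pi_le_four, Real.pi_pos]
    nlinarith [mul_le_mul_of_nonneg_right hπ hC₀ρ.le]
  calc _ ≤ 1 / ρ ^ 4 * (C₀⁻¹ / n ^ 2) * ∑' z : A, ν.real (ball (z : T2) (ρ / 4)) ^ 2 :=
        mul_le_mul_of_nonneg_right hconst (tsum_nonneg fun _ => sq_nonneg _)
    _ ≤ 1 / ρ ^ 4 * ∫ y, ν.real (ball y ρ) ^ 2 ∂m := by
        rw [mul_assoc]
        gcongr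
        exact mul_tsum_measureReal_ball_sq_le_integral m ν hsep' (by linarith) hball
    _ = rinner m ν ν ρ := by simp only [rinner, sq]; rfl

/-- Let `ρ ∈ (0,1]` and let `A` be a maximal `(ρ/5)`-separated subset of
`T²`.  Then for every finite Borel measure `ν` on `T²`,
`‖ν‖²_ρ ≥ (π / (4·19²·C₀·ρ²)) · Σ_{z∈A} ν(B(z,ρ/4))²`. -/
theorem rnormSq_ge_separated_sum
    (C₀ : ℝ) (hC₀ : 1 ≤ C₀) (Leb m : Measure T2)
    [IsProbabilityMeasure Leb] [Leb.IsAddHaarMeasure]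
    [IsProbabilityMeasure m] (hm : DensityBounds C₀ Leb m)
    (ρ : ℝ) (hρ : 0 < ρ) (hρ' : ρ ≤ 1) (A : Set T2)
    (hsep : IsSeparated' (ρ / 5) A)
    (hmax : ∀ B : Set T2, A ⊆ B → IsSeparated' (ρ / 5) B → B = A)
    (ν : Measure T2) [IsFiniteMeasure ν] :
    (Real.pi / (4 * 19 ^ 2 * C₀ * ρ ^ 2)) * ∑' z : A, (ν (ball (z : T2) (ρ / 4))).toReal ^ 2 ≤
      rinner m ν ν ρ :=
  rnormSq_ge_separated_sum_general C₀ hC₀ Leb m hm ρ hρ hρ' A hsep ν
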